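/- arXiv:1706.07125 — 6 statements merged into one kernel-verified Lean document; each statement's English description precedes it below -/
import Mathlib

section
/- Let F : [0,∞) → [0,∞) be a bounded nonnegative function and c > 0 a constant such that for all λ ≥ 0, F(λ) ≤ (1/c) ∫₀¹ ∫₀^λ F(u·s) ds du. Then F is identically zero. -/
/-!
Iterate the hypothesis starting from `F ≤ C`. Since `∫₀¹ ∫₀ˡ (us)ⁿ ds du = lⁿ⁺¹ / (n + 1)²`,
a bound `F x ≤ K xⁿ` improves to `F x ≤ K xⁿ⁺¹ / (c (n + 1)²)`, so `F l ≤ C (l / c)ⁿ / (n!)²`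
for every `n`, and the right-hand side tends to `0`.
-/

open MeasureTheory intervalIntegral Set Filter Topology Nat

section AveragingBound

variable {E : Type*} [NormedAddCommGroup E] [NormedSpace ℝ E] {F : ℝ → E} {K l : ℝ} {n : ℕ}

lemma norm_integral_comp_mul_le_of_norm_le_mul_pow (hl : 0 ≤ l)
    (hF : ∀ x ∈ Icc 0 l, ‖F x‖ ≤ K * x ^ n) {u : ℝ} (hu : u ∈ Icc (0 : ℝ) 1) :
    ‖∫ s in (0 : ℝ)..l, F (u * s)‖ ≤ K * u ^ n * (l ^ (n + 1) / (n + 1)) := by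
  calc ‖∫ s in (0 : ℝ)..l, F (u * s)‖ ≤ ∫ s in (0 : ℝ)..l, K * u ^ n * s ^ n := by
        refine intervalIntegral.norm_integral_le_of_norm_le hl (ae_of_all _ fun s hs => ?_)
          ((by fun_prop : Continuous fun s : ℝ => K * u ^ n * s ^ n).intervalIntegrable _ _)
        have hus : u * s ∈ Icc 0 l :=
          ⟨mul_nonneg hu.1 hs.1.le, by nlinarith [hu.1, hu.2, hs.1, hs.2]⟩
        calc ‖F (u * s)‖ ≤ K * (u * s) ^ n := hF _ hus
          _ = K * u ^ n * s ^ n := by ring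
    _ = K * u ^ n * (l ^ (n + 1) / (n + 1)) := by simp [integral_pow]

lemma norm_integral_integral_comp_mul_le_of_norm_le_mul_pow (hl : 0 ≤ l)
    (hF : ∀ x ∈ Icc 0 l, ‖F x‖ ≤ K * x ^ n) :
    ‖∫ u in (0 : ℝ)..1, ∫ s in (0 : ℝ)..l, F (u * s)‖ ≤ K * l ^ (n + 1) / (n + 1) ^ 2 := by
  calc ‖∫ u in (0 : ℝ)..1, ∫ s in (0 : ℝ)..l, F (u * s)‖
      ≤ ∫ u in (0 : ℝ)..1, K * u ^ n * (l ^ (n + 1) / (n + 1)) :=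
        intervalIntegral.norm_integral_le_of_norm_le zero_le_one
          (ae_of_all _ fun u hu =>
            norm_integral_comp_mul_le_of_norm_le_mul_pow hl hF (Ioc_subset_Icc_self hu))
          ((by fun_prop : Continuous fun u : ℝ =>
            K * u ^ n * (l ^ (n + 1) / (n + 1))).intervalIntegrable _ _)
    _ = K * l ^ (n + 1) / (n + 1) ^ 2 := by
        simp only [intervalIntegral.integral_mul_const, intervalIntegral.integral_const_mul,
          integral_pow]
        field_simp
        ring

end AveragingBound

lemma tendsto_pow_div_factorial_sq_atTop (x : ℝ) :
    Tendsto (fun n : ℕ => x ^ n / (n ! : ℝ) ^ 2) atTop (𝓝 0) := by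
  simpa [div_div, sq] using
    (FloorSemiring.tendsto_pow_div_factorial_atTop x).div_atTop
      (tendsto_natCast_atTop_atTop.comp factorial_tendsto_atTop)

theorem stmt_0 (F : ℝ → ℝ) (c C : ℝ) (hc : 0 < c)
    (hF_nonneg : ∀ l, 0 ≤ l → 0 ≤ F l)
    (hF_bdd : ∀ l, 0 ≤ l → F l ≤ C)
    (hF : ∀ l, 0 ≤ l →
      F l ≤ (1 / c) * ∫ u in (0:ℝ)..1, ∫ s in (0:ℝ)..l, F (u * s)) :
    ∀ l, 0 ≤ l → F l = 0 := by
  have hbound : ∀ n : ℕ, ∀ l, 0 ≤ l → F l ≤ C / (c ^ n * (n ! : ℝ) ^ 2) * l ^ n := by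
    intro n
    induction n with
    | zero => simpa using hF_bdd
    | succ n ih =>
      intro l hl
      have hnorm : ∀ x ∈ Icc 0 l, ‖F x‖ ≤ C / (c ^ n * (n ! : ℝ) ^ 2) * x ^ n := fun x hx => by
        rw [Real.norm_of_nonneg (hF_nonneg x hx.1)]
        exact ih x hx.1
      calc F l ≤ (1 / c) * ∫ u in (0:ℝ)..1, ∫ s in (0:ℝ)..l, F (u * s) := hF l hl
        _ ≤ (1 / c) * (C / (c ^ n * (n ! : ℝ) ^ 2) * l ^ (n + 1) / (n + 1) ^ 2) :=
          mul_le_mul_of_nonneg_left ((le_abs_self _).trans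
            (norm_integral_integral_comp_mul_le_of_norm_le_mul_pow hl hnorm)) (by positivity)
        _ = C / (c ^ (n + 1) * ((n + 1)! : ℝ) ^ 2) * l ^ (n + 1) := by
          push_cast [Nat.factorial_succ]
          field_simp
          ring
  intro l hl
  have hlim : Tendsto (fun n : ℕ => C / (c ^ n * (n ! : ℝ) ^ 2) * l ^ n) atTop (𝓝 0) := by
    have hC := (tendsto_pow_div_factorial_sq_atTop (l / c)).const_mul C
    rw [mul_zero] at hC
    refine hC.congr fun n => ?_
    rw [div_pow]
    field_simp
  exact le_antisymm (ge_of_tendsto' hlim fun n => hbound n l hl) (hF_nonneg l hl)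
end

section
/- For nonnegative random variables X and Y with equal finite positive means, if the Laplace transforms of their size-biased transforms are equal for all λ ≥ 0, i.e. E[X e^{-λX}]/E[X] = E[Y e^{-λY}]/E[Y] for all λ ≥ 0, then X and Y have the same distribution. -/
/-!
Cancelling the common mean, the hypothesis says that the measures `x μ(dx)` and `x ν(dx)`, for
`μ`, `ν` the laws of `X`, `Y`, have the same Laplace transform at `λ = 0, 1, 2, …`. For a finite
measure on `[0, ∞)` these values are the moments of its image under `x ↦ e^{-x}`, a measure on
`[0, 1]`, and moments determine a finite measure on `[0, 1]` by Weierstrass approximation. Hence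
`x μ(dx) = x ν(dx)`, so `μ` and `ν` agree on `(0, ∞)`, and the atom at `0` is fixed by the total
mass.
-/

open MeasureTheory Set Real

namespace ContinuousMap

theorem continuous_integral {X : Type*} [TopologicalSpace X] [CompactSpace X]
    [MeasurableSpace X] [BorelSpace X] (μ : Measure X) [IsFiniteMeasure μ] :
    Continuous fun f : C(X, ℝ) ↦ ∫ x, f x ∂μ := by
  have h : (fun f : C(X, ℝ) ↦ ∫ x, f x ∂μ) = fun f ↦ ∫ x, toLp 1 μ ℝ f x ∂μ :=
    funext fun f ↦ (integral_congr_ae (coeFn_toLp μ f)).symm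
  rw [h]
  exact MeasureTheory.continuous_integral.comp (toLp 1 μ ℝ).continuous

end ContinuousMap

namespace MeasureTheory.Measure

theorem ext_of_integral_pow_eq {a b : ℝ} {μ ν : Measure (Icc a b)}
    [IsFiniteMeasure μ] [IsFiniteMeasure ν]
    (h : ∀ n : ℕ, ∫ x, (x : ℝ) ^ n ∂μ = ∫ x, (x : ℝ) ^ n ∂ν) : μ = ν := by
  have h_poly : ∀ p : Polynomial ℝ, ∫ x, p.eval (x : ℝ) ∂μ = ∫ x, p.eval (x : ℝ) ∂ν := by
    intro p
    have h_int : ∀ (m : Measure (Icc a b)) [IsFiniteMeasure m] (i : ℕ),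
        Integrable (fun x : Icc a b ↦ p.coeff i * (x : ℝ) ^ i) m := fun m _ i ↦
      Continuous.integrable_of_hasCompactSupport (by fun_prop) (.of_compactSpace _)
    simp only [Polynomial.eval_eq_sum_range]
    rw [integral_finsetSum _ fun i _ ↦ h_int μ i, integral_finsetSum _ fun i _ ↦ h_int ν i]
    simp only [integral_const_mul, h]
  -- The integral is continuous in the sup norm, and polynomials are dense (Weierstrass).
  have h_cont : ∀ f : C(Icc a b, ℝ), ∫ x, f x ∂μ = ∫ x, f x ∂ν := by
    have h_dense : closure (polynomialFunctions (Icc a b) : Set C(Icc a b, ℝ)) = univ := by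
      rw [← Subalgebra.topologicalClosure_coe, polynomialFunctions_closure_eq_top,
        Algebra.coe_top]
    intro f
    refine EqOn.closure (fun g hg ↦ ?_) (ContinuousMap.continuous_integral μ)
      (ContinuousMap.continuous_integral ν) (h_dense ▸ mem_univ f)
    obtain ⟨p, -, rfl⟩ := Subalgebra.mem_map.mp hg
    exact h_poly p
  exact ext_of_forall_integral_eq_of_IsFiniteMeasure fun f ↦ h_cont f.toContinuousMap

theorem ext_of_integral_exp_neg_nat_mul_eq {μ ν : Measure ℝ}
    [IsFiniteMeasure μ] [IsFiniteMeasure ν] (hμ : ∀ᵐ x ∂μ, 0 ≤ x) (hν : ∀ᵐ x ∂ν, 0 ≤ x)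
    (h : ∀ n : ℕ, ∫ x, exp (-n * x) ∂μ = ∫ x, exp (-n * x) ∂ν) : μ = ν := by
  set G : ℝ → Icc (0 : ℝ) 1 := fun x ↦ projIcc 0 1 zero_le_one (exp (-x))
  have hG_meas : Measurable G := (continuous_projIcc.comp (by fun_prop)).measurable
  have hG : ∀ x, 0 ≤ x → (G x : ℝ) = exp (-x) := fun x hx ↦
    congrArg Subtype.val (projIcc_of_mem _ ⟨(exp_pos _).le, exp_le_one_iff.2 (neg_nonpos.2 hx)⟩)
  have h_moments : ∀ (m : Measure ℝ), (∀ᵐ x ∂m, 0 ≤ x) → ∀ n : ℕ,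
      ∫ t, (t : ℝ) ^ n ∂m.map G = ∫ x, exp (-n * x) ∂m := by
    intro m hm n
    rw [integral_map hG_meas.aemeasurable (by fun_prop)]
    refine integral_congr_ae (hm.mono fun x hx ↦ ?_)
    simp only [hG x hx, ← exp_nat_mul]
    ring_nf
  have h_inv : ∀ (m : Measure ℝ), (∀ᵐ x ∂m, 0 ≤ x) →
      (m.map G).map (fun t : Icc (0 : ℝ) 1 ↦ -log t) = m := by
    intro m hm
    rw [Measure.map_map (by fun_prop) hG_meas]
    refine (Measure.map_congr (hm.mono fun x hx ↦ ?_)).trans Measure.map_id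
    simp [hG x hx]
  have h_map : μ.map G = ν.map G := ext_of_integral_pow_eq fun n ↦ by
    rw [h_moments μ hμ, h_moments ν hν, h]
  rw [← h_inv μ hμ, ← h_inv ν hν, h_map]

section SizeBias

variable {μ ν : Measure ℝ}

/-- Unnormalised: the size-biased law of `μ` is `μ.sizeBias` divided by `∫ x ∂μ`. -/
noncomputable def sizeBias (μ : Measure ℝ) : Measure ℝ :=
  μ.withDensity fun x ↦ ENNReal.ofReal x

theorem ae_nonneg_sizeBias (hμ : ∀ᵐ x ∂μ, 0 ≤ x) : ∀ᵐ x ∂μ.sizeBias, 0 ≤ x :=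
  withDensity_absolutelyContinuous μ _ |>.ae_le hμ

theorem isFiniteMeasure_sizeBias (hμ : Integrable id μ) : IsFiniteMeasure μ.sizeBias :=
  isFiniteMeasure_withDensity_ofReal hμ.hasFiniteIntegral

theorem integral_sizeBias (hμ : ∀ᵐ x ∂μ, 0 ≤ x) (f : ℝ → ℝ) :
    ∫ x, f x ∂μ.sizeBias = ∫ x, x * f x ∂μ := by
  rw [sizeBias, integral_withDensity_eq_integral_toReal_smul ENNReal.measurable_ofReal
    (ae_of_all _ fun _ ↦ ENNReal.ofReal_lt_top)]
  refine integral_congr_ae (hμ.mono fun x hx ↦ ?_)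
  simp [ENNReal.toReal_ofReal hx]

theorem restrict_Ioi_eq_of_sizeBias_eq (h : μ.sizeBias = ν.sizeBias) :
    μ.restrict (Ioi 0) = ν.restrict (Ioi 0) := by
  have h_recover : ∀ m : Measure ℝ, m.restrict (Ioi 0) =
      (m.sizeBias.restrict (Ioi 0)).withDensity fun x ↦ (ENNReal.ofReal x)⁻¹ := by
    intro m
    rw [sizeBias, restrict_withDensity measurableSet_Ioi, withDensity_inv_same
      ENNReal.measurable_ofReal _ (ae_of_all _ fun _ ↦ ENNReal.ofReal_ne_top)]
    filter_upwards [ae_restrict_mem measurableSet_Ioi] with x hx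
    exact ENNReal.ofReal_pos.2 hx |>.ne'
  rw [h_recover μ, h_recover ν, h]

theorem eq_dirac_add_restrict_Ioi (hμ : ∀ᵐ x ∂μ, 0 ≤ x) :
    μ = μ {0} • dirac 0 + μ.restrict (Ioi 0) := by
  rw [← restrict_singleton, ← restrict_union (by simp) measurableSet_Ioi, ← insert_eq,
    Ioi_insert]
  exact (restrict_eq_self_of_ae_mem hμ).symm

theorem eq_of_restrict_Ioi_eq [IsFiniteMeasure μ] (huniv : μ univ = ν univ)
    (hμ : ∀ᵐ x ∂μ, 0 ≤ x) (hν : ∀ᵐ x ∂ν, 0 ≤ x) (h : μ.restrict (Ioi 0) = ν.restrict (Ioi 0)) :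
    μ = ν := by
  have h_atom : μ {0} = ν {0} := by
    have h_univ := huniv
    rw [eq_dirac_add_restrict_Ioi hμ, eq_dirac_add_restrict_Ioi hν, ← h] at h_univ
    simpa using (ENNReal.add_left_inj (measure_ne_top _ _)).1 h_univ
  rw [eq_dirac_add_restrict_Ioi hμ, eq_dirac_add_restrict_Ioi hν, h_atom, h]

theorem ext_of_integral_mul_exp_neg_nat_mul_eq [IsFiniteMeasure μ] (huniv : μ univ = ν univ)
    (hμ : ∀ᵐ x ∂μ, 0 ≤ x) (hν : ∀ᵐ x ∂ν, 0 ≤ x) (hμ_int : Integrable id μ)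
    (hν_int : Integrable id ν)
    (h : ∀ n : ℕ, ∫ x, x * exp (-n * x) ∂μ = ∫ x, x * exp (-n * x) ∂ν) : μ = ν := by
  have := isFiniteMeasure_sizeBias hμ_int
  have := isFiniteMeasure_sizeBias hν_int
  refine eq_of_restrict_Ioi_eq huniv hμ hν (restrict_Ioi_eq_of_sizeBias_eq ?_)
  refine ext_of_integral_exp_neg_nat_mul_eq (ae_nonneg_sizeBias hμ) (ae_nonneg_sizeBias hν)
    fun n ↦ ?_
  rw [integral_sizeBias hμ, integral_sizeBias hν, h]

end SizeBias

end MeasureTheory.Measure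

theorem stmt_3 {Ω : Type*} [MeasureSpace Ω] (P : Measure Ω) [IsProbabilityMeasure P]
    (X Y : Ω → ℝ) (hX : Measurable X) (hY : Measurable Y)
    (hX_nonneg : ∀ ω, 0 ≤ X ω) (hY_nonneg : ∀ ω, 0 ≤ Y ω)
    (hX_int : Integrable X P) (hY_int : Integrable Y P)
    (h_mean_pos : 0 < ∫ ω, X ω ∂P)
    (h_mean_eq : ∫ ω, X ω ∂P = ∫ ω, Y ω ∂P)
    (h_laplace : ∀ l : ℝ, 0 ≤ l →
      (∫ ω, X ω * Real.exp (-l * X ω) ∂P) / (∫ ω, X ω ∂P) =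
        (∫ ω, Y ω * Real.exp (-l * Y ω) ∂P) / (∫ ω, Y ω ∂P)) :
    P.map X = P.map Y := by
  have h_sizeBias : ∀ n : ℕ, ∫ x, x * Real.exp (-n * x) ∂P.map X =
      ∫ x, x * Real.exp (-n * x) ∂P.map Y := fun n ↦ by
    rw [integral_map hX.aemeasurable (by fun_prop), integral_map hY.aemeasurable (by fun_prop)]
    have h := h_laplace n n.cast_nonneg
    rwa [← h_mean_eq, div_left_inj' h_mean_pos.ne'] at h
  have := Measure.isProbabilityMeasure_map (μ := P) hX.aemeasurable
  have := Measure.isProbabilityMeasure_map (μ := P) hY.aemeasurable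
  refine Measure.ext_of_integral_mul_exp_neg_nat_mul_eq (by simp)
    ((ae_map_iff hX.aemeasurable measurableSet_Ici).2 (ae_of_all _ hX_nonneg))
    ((ae_map_iff hY.aemeasurable measurableSet_Ici).2 (ae_of_all _ hY_nonneg))
    ((integrable_map_measure aestronglyMeasurable_id hX.aemeasurable).2 hX_int)
    ((integrable_map_measure aestronglyMeasurable_id hY.aemeasurable).2 hY_int) h_sizeBias
end

section
/- Let Y be an exponential random variable with rate θ > 0, let Ẏ and Ẏ' be independent copies of its Y-size-biased transform (which has a Gamma(2,θ) distribution), let Ÿ be its Y²-size-biased transform (which has a Gamma(3,θ) distribution), and let U be uniform on [0,1], with Ẏ, Ẏ', Ÿ, U independent. Then Ÿ and Ẏ + U·Ẏ' have the same distribution. -/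
/-!
For `t ≥ 0`, `P(U Ẏ' > t) = E[(1 - t / Ẏ')⁺]`, and `θ² (x - t) e^{-θx}` on `x > t` is `e^{-θt}`
times the Gamma(2, θ) density shifted by `t`; so `U Ẏ'` is exponential with rate `θ`.
Then `Ẏ + U Ẏ'` has law Gamma(2, θ) ∗ Exp(θ) = Gamma(3, θ): more generally the convolution
integrand of Gamma(a, θ) ∗ Exp(θ) at `z` is `θ^(a+1) e^{-θz} y^(a-1) / Γ(a)` on `[0, z]`,
which integrates to the Gamma(a + 1, θ) density.
-/

open MeasureTheory ProbabilityTheory Real Set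

namespace ProbabilityTheory

variable {a r t : ℝ}

lemma measurable_gammaPDF (a r : ℝ) : Measurable (gammaPDF a r) :=
  (measurable_gammaPDFReal a r).ennreal_ofReal

lemma gammaPDF_mul_gammaPDF_one_neg_add (hr : 0 < r) (z y : ℝ) :
    gammaPDF a r y * gammaPDF 1 r (-y + z) =
      (Icc 0 z).indicator
        (fun y ↦ ENNReal.ofReal (r ^ (a + 1) / Gamma a * exp (-(r * z)) * y ^ (a - 1))) y := by
  by_cases hy : y ∈ Icc 0 z
  · rw [indicator_of_mem hy, gammaPDF_of_nonneg hy.1, gammaPDF_of_nonneg (by linarith [hy.2]),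
      rpow_add hr, sub_self, rpow_zero, rpow_one, Gamma_one,
      ← ENNReal.ofReal_mul' (by positivity),
      show -(r * z) = -(r * y) + -(r * (-y + z)) by ring, exp_add]
    congr 1
    ring
  · rw [indicator_of_notMem hy]
    rcases not_and_or.mp hy with hy | hy
    · rw [gammaPDF_of_neg (not_le.mp hy), zero_mul]
    · rw [gammaPDF_of_neg (x := -y + z) (by linarith [not_le.mp hy]), mul_zero]

lemma gammaPDF_lconvolution_gammaPDF_one (ha : 0 < a) (hr : 0 < r) (z : ℝ) :
    (gammaPDF a r ⋆ₗ gammaPDF 1 r) z = gammaPDF (a + 1) r z := by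
  simp_rw [lconvolution_def, gammaPDF_mul_gammaPDF_one_neg_add hr z]
  rw [lintegral_indicator measurableSet_Icc]
  rcases lt_or_ge z 0 with hz | hz
  · rw [Icc_eq_empty (not_le.mpr hz), Measure.restrict_empty, lintegral_zero_measure,
      gammaPDF_of_neg hz]
  · rw [← ofReal_integral_eq_lintegral_ofReal, integral_Icc_eq_integral_Ioc,
      ← intervalIntegral.integral_of_le hz, intervalIntegral.integral_const_mul,
      integral_rpow (Or.inl (by linarith)), gammaPDF_of_nonneg hz, Gamma_add_one ha.ne']
    · congr 1
      rw [sub_add_cancel, add_sub_cancel_right, zero_rpow ha.ne', sub_zero]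
      field_simp
    · exact ((intervalIntegral.intervalIntegrable_rpow' (by linarith)).const_mul _ |>
        (intervalIntegrable_iff_integrableOn_Icc_of_le hz).mp)
    · exact ae_restrict_of_forall_mem measurableSet_Icc fun y hy ↦
        mul_nonneg (mul_nonneg (div_nonneg (by positivity) (Gamma_pos_of_pos ha).le)
          (exp_pos _).le) (rpow_nonneg hy.1 _)

lemma gammaMeasure_conv_expMeasure (ha : 0 < a) (hr : 0 < r) :
    gammaMeasure a r ∗ expMeasure r = gammaMeasure (a + 1) r := by
  rw [expMeasure, gammaMeasure, gammaMeasure,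
    conv_withDensity_eq_lconvolution (measurable_gammaPDF a r) (measurable_gammaPDF 1 r)]
  congr 1
  funext z
  exact gammaPDF_lconvolution_gammaPDF_one ha hr z

lemma gammaPDF_two (r x : ℝ) : gammaPDF 2 r x = ENNReal.ofReal (r ^ 2 * x * exp (-(r * x))) := by
  rcases lt_or_ge x 0 with hx | hx
  · rw [gammaPDF_of_neg hx, ENNReal.ofReal_of_nonpos]
    exact mul_nonpos_of_nonpos_of_nonneg (mul_nonpos_of_nonneg_of_nonpos (sq_nonneg r) hx.le)
      (exp_pos _).le
  · rw [gammaPDF_of_nonneg hx]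
    norm_num

lemma gammaPDF_two_of_nonpos {x : ℝ} (hx : x ≤ 0) : gammaPDF 2 r x = 0 := by
  rw [gammaPDF_two, ENNReal.ofReal_of_nonpos]
  exact mul_nonpos_of_nonpos_of_nonneg (mul_nonpos_of_nonneg_of_nonpos (sq_nonneg r) hx)
    (exp_pos _).le

lemma uniform_Ioi {s : ℝ} (hs : 0 ≤ s) :
    volume.restrict (Icc (0 : ℝ) 1) (Ioi s) = ENNReal.ofReal (1 - s) := by
  rw [Measure.restrict_apply measurableSet_Ioi, ← Ici_inter_Iic, ← inter_assoc,
    inter_eq_left.mpr (Ioi_subset_Ici hs), Ioi_inter_Iic, Real.volume_Ioc]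

lemma mconv_Iio_zero_eq_zero {μ ν : Measure ℝ} [SFinite ν] (hμ : μ (Iio 0) = 0)
    (hν : ν (Iio 0) = 0) : (μ ∗ₘ ν) (Iio 0) = 0 := by
  rw [Measure.mconv, Measure.map_apply measurable_mul measurableSet_Iio]
  refine measure_mono_null (t := Iio 0 ×ˢ univ ∪ univ ×ˢ Iio 0) (fun p hp ↦ ?_) ?_
  · by_contra! h
    simp only [mem_union, mem_prod, mem_Iio, mem_univ, and_true, true_and, not_or, not_lt] at h
    exact (mul_nonneg h.1 h.2).not_gt hp
  · rw [measure_union_null_iff, Measure.prod_prod, Measure.prod_prod, hμ, hν, zero_mul,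
      mul_zero]
    exact ⟨rfl, rfl⟩

lemma gammaPDF_two_mul_uniform (ht : 0 ≤ t) (x : ℝ) :
    gammaPDF 2 r x * volume.restrict (Icc (0 : ℝ) 1) {u | t < u * x} =
      ENNReal.ofReal (exp (-(r * t))) * gammaPDF 2 r (x - t) := by
  rcases le_or_gt x 0 with hx | hx
  · rw [gammaPDF_two_of_nonpos hx, gammaPDF_two_of_nonpos (by linarith), zero_mul, mul_zero]
  · have : {u | t < u * x} = Ioi (t / x) := by
      ext u
      simp [div_lt_iff₀ hx]
    rw [this, uniform_Ioi (div_nonneg ht hx.le), gammaPDF_two, gammaPDF_two,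
      ← ENNReal.ofReal_mul (by positivity), ← ENNReal.ofReal_mul (exp_pos _).le]
    congr 1
    rw [show -(r * x) = -(r * t) + -(r * (x - t)) by ring, exp_add]
    field_simp

lemma uniform_mconv_gammaMeasure_two_Ioi (hr : 0 < r) (ht : 0 ≤ t) :
    (volume.restrict (Icc (0 : ℝ) 1) ∗ₘ gammaMeasure 2 r) (Ioi t) =
      ENNReal.ofReal (exp (-(r * t))) := by
  have := isProbabilityMeasure_gammaMeasure two_pos hr
  have hs : MeasurableSet ((fun p : ℝ × ℝ ↦ p.1 * p.2) ⁻¹' Ioi t) :=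
    measurable_mul measurableSet_Ioi
  rw [Measure.mconv, Measure.map_apply measurable_mul measurableSet_Ioi,
    Measure.prod_apply_symm hs, gammaMeasure,
    lintegral_withDensity_eq_lintegral_mul _ (measurable_gammaPDF 2 r)
      (measurable_measure_prodMk_right hs)]
  calc ∫⁻ x, gammaPDF 2 r x * volume.restrict (Icc (0 : ℝ) 1) {u | t < u * x}
      = ∫⁻ x, ENNReal.ofReal (exp (-(r * t))) * gammaPDF 2 r (x - t) :=
        lintegral_congr (gammaPDF_two_mul_uniform ht)
    _ = ENNReal.ofReal (exp (-(r * t))) := by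
      rw [lintegral_const_mul' _ _ ENNReal.ofReal_ne_top,
        lintegral_sub_right_eq_self (gammaPDF 2 r) t, lintegral_gammaPDF_eq_one two_pos hr,
        mul_one]

lemma uniform_mconv_gammaMeasure_two (hr : 0 < r) :
    volume.restrict (Icc (0 : ℝ) 1) ∗ₘ gammaMeasure 2 r = expMeasure r := by
  have := isProbabilityMeasure_gammaMeasure two_pos hr
  have := isProbabilityMeasure_expMeasure hr
  have : IsProbabilityMeasure (volume.restrict (Icc (0 : ℝ) 1)) := ⟨by simp⟩
  refine Measure.ext_of_Iic _ _ fun t ↦ ?_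
  rw [← ofReal_cdf (expMeasure r), cdf_expMeasure_eq hr]
  split_ifs with ht
  · rw [← compl_Ioi, prob_compl_eq_one_sub measurableSet_Ioi,
      uniform_mconv_gammaMeasure_two_Ioi hr ht, ENNReal.ofReal_sub _ (exp_pos _).le,
      ENNReal.ofReal_one]
  · refine ENNReal.ofReal_zero ▸ measure_mono_null (Iic_subset_Iio.mpr (not_le.mp ht))
      (mconv_Iio_zero_eq_zero ?_ ?_)
    · rw [Measure.restrict_apply measurableSet_Iio,
        ((Iio_disjoint_Ici le_rfl).mono_right Icc_subset_Ici_self).inter_eq, measure_empty]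
    · rw [gammaMeasure, withDensity_apply _ measurableSet_Iio, lintegral_gammaPDF_of_nonpos le_rfl]

end ProbabilityTheory

theorem stmt_4 {Ω : Type*} [MeasureSpace Ω] (P : Measure Ω) [IsProbabilityMeasure P]
    (θ : ℝ) (hθ : 0 < θ)
    (Ydot Ydot' Yddot U : Ω → ℝ)
    (hYdot : Measurable Ydot) (hYdot' : Measurable Ydot')
    (hYddot : Measurable Yddot) (hU : Measurable U)
    (hYdot_law : P.map Ydot = gammaMeasure 2 θ)
    (hYdot'_law : P.map Ydot' = gammaMeasure 2 θ)
    (hYddot_law : P.map Yddot = gammaMeasure 3 θ)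
    (hU_law : P.map U = (volume.restrict (Set.Icc (0:ℝ) 1)))
    (h_indep : iIndepFun ![Ydot, Ydot', Yddot, U] P) :
    P.map Yddot = P.map (fun ω => Ydot ω + U ω * Ydot' ω) := by
  have h_meas : ∀ i, Measurable (![Ydot, Ydot', Yddot, U] i) := by
    simp [Fin.forall_fin_succ, hYdot, hYdot', hYddot, hU]
  have h_law_mul : P.map (U * Ydot') = expMeasure θ := by
    rw [(h_indep.indepFun (i := 3) (j := 1) (by decide)).map_mul_eq_map_mconv_map hU hYdot',
      hU_law, hYdot'_law, uniform_mconv_gammaMeasure_two hθ]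
  have h_indep_add : IndepFun Ydot (U * Ydot') P :=
    h_indep.indepFun_mul_right h_meas 0 3 1 (by decide) (by decide)
  change _ = P.map (Ydot + U * Ydot')
  rw [h_indep_add.map_add_eq_map_conv_map hYdot (hU.mul hYdot'), hYdot_law, h_law_mul,
    gammaMeasure_conv_expMeasure two_pos hθ, hYddot_law]
  norm_num
end

section
/- Let X be a nonnegative random variable with E[X] ∈ (0,∞). Then for every λ ≥ 0, E[1 - e^{-λX} | X > 0] = E[X | X > 0] · ∫₀^λ E[e^{-sẊ}] ds, where Ẋ is the X-size-biased transform of X. -/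
open MeasureTheory ProbabilityTheory

/-- The law of the `X`-size-biased transform of a random variable with law `μ`
and mean `a`: `dν(x) = x dμ(x) / a`. -/
noncomputable def sizeBiasedLaw (μ : Measure ℝ) (a : ℝ) : Measure ℝ :=
  (ENNReal.ofReal a)⁻¹ • μ.withDensity (fun x => ENNReal.ofReal x)

/-!
Both sides are ratios by `P(X > 0)`, which cancels: conditioning on `{X > 0}` only rescales
integrals of functions vanishing where `X = 0`, such as `X` and `1 - e^{-λX}`.  The
size-biased Laplace transform is `E[X e^{-sX}] / E[X]`, and by Fubini
`∫₀^λ E[X e^{-sX}] ds = E[∫₀^λ X e^{-sX} ds] = E[1 - e^{-λX}]`.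
-/

open Real Set

theorem integral_sizeBiasedLaw {μ : Measure ℝ} {a : ℝ} (ha : 0 ≤ a) (hμ : ∀ᵐ x ∂μ, 0 ≤ x)
    (g : ℝ → ℝ) :
    ∫ x, g x ∂(sizeBiasedLaw μ a) = a⁻¹ * ∫ x, x * g x ∂μ := by
  rw [sizeBiasedLaw, integral_smul_measure, ENNReal.toReal_inv, ENNReal.toReal_ofReal ha,
    smul_eq_mul]
  congr 1
  rw [integral_withDensity_eq_integral_toReal_smul ENNReal.measurable_ofReal
    (.of_forall fun _ => ENNReal.ofReal_lt_top)]
  refine integral_congr_ae (hμ.mono fun x hx => ?_)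
  simp only [ENNReal.toReal_ofReal hx, smul_eq_mul]

theorem integral_mul_exp_neg_mul (c l : ℝ) :
    ∫ t in (0 : ℝ)..l, c * exp (-t * c) = 1 - exp (-l * c) := by
  have hderiv : ∀ t ∈ uIcc (0 : ℝ) l,
      HasDerivAt (fun t => -exp (-t * c)) (c * exp (-t * c)) t := fun t _ =>
    (((hasDerivAt_neg t).mul_const c).exp).neg.congr_deriv (by ring)
  rw [intervalIntegral.integral_eq_sub_of_hasDerivAt hderiv
    ((by fun_prop : Continuous fun t => c * exp (-t * c)).intervalIntegrable _ _)]
  simp only [neg_zero, zero_mul, exp_zero]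
  ring

section

variable {Ω : Type*} [MeasurableSpace Ω] {P : Measure Ω} {X : Ω → ℝ}

theorem integral_cond_of_forall_compl_eq_zero {s : Set Ω} {f : Ω → ℝ}
    (hf : ∀ ω ∉ s, f ω = 0) :
    ∫ ω, f ω ∂(P[|s]) = (P s).toReal⁻¹ * ∫ ω, f ω ∂P := by
  rw [ProbabilityTheory.cond, integral_smul_measure, ENNReal.toReal_inv,
    setIntegral_eq_integral_of_forall_compl_eq_zero hf, smul_eq_mul]

theorem integral_sizeBiasedLaw_map (hX : Measurable X) (hX_nonneg : ∀ ω, 0 ≤ X ω)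
    {a : ℝ} (ha : 0 ≤ a) {g : ℝ → ℝ} (hg : Measurable g) :
    ∫ x, g x ∂(sizeBiasedLaw (P.map X) a) = a⁻¹ * ∫ ω, X ω * g (X ω) ∂P := by
  have hμ : ∀ᵐ x ∂(P.map X), 0 ≤ x :=
    (ae_map_iff hX.aemeasurable measurableSet_Ici).2 (.of_forall hX_nonneg)
  rw [integral_sizeBiasedLaw ha hμ, integral_map hX.aemeasurable]
  exact (measurable_id.mul hg).aestronglyMeasurable

theorem intervalIntegral_integral_mul_exp_neg_mul [SFinite P] (hX : Measurable X)
    (hX_nonneg : ∀ ω, 0 ≤ X ω) (hX_int : Integrable X P) {l : ℝ} (hl : 0 ≤ l) :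
    ∫ t in (0 : ℝ)..l, ∫ ω, X ω * exp (-t * X ω) ∂P = ∫ ω, (1 - exp (-l * X ω)) ∂P := by
  have hint : Integrable (fun z : ℝ × Ω => X z.2 * exp (-z.1 * X z.2))
      ((volume.restrict (Ioc 0 l)).prod P) := by
    refine (hX_int.comp_snd _).mono' (by fun_prop) ?_
    rw [← Measure.restrict_univ (μ := P), Measure.prod_restrict]
    filter_upwards [ae_restrict_mem (measurableSet_Ioc.prod MeasurableSet.univ)] with z hz
    have hexp : exp (-z.1 * X z.2) ≤ 1 :=
      exp_le_one_iff.2 (by nlinarith [hz.1.1.le, hX_nonneg z.2])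
    rw [norm_of_nonneg (mul_nonneg (hX_nonneg z.2) (exp_pos _).le)]
    exact mul_le_of_le_one_right (hX_nonneg z.2) hexp
  rw [intervalIntegral.integral_of_le hl, integral_integral_swap hint]
  refine integral_congr_ae (.of_forall fun ω => ?_)
  dsimp only
  rw [← intervalIntegral.integral_of_le hl]
  exact integral_mul_exp_neg_mul (X ω) l

theorem measure_setOf_pos_ne_zero_of_integral_pos (hX_nonneg : ∀ ω, 0 ≤ X ω)
    (hX_int : Integrable X P) (hX_pos : 0 < ∫ ω, X ω ∂P) :
    P {ω | 0 < X ω} ≠ 0 := by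
  rw [integral_pos_iff_support_of_nonneg hX_nonneg hX_int] at hX_pos
  convert hX_pos.ne'
  ext ω
  simp [(hX_nonneg ω).lt_iff_ne, eq_comm]

end

theorem stmt_6 {Ω : Type*} [MeasureSpace Ω] (P : Measure Ω) [IsProbabilityMeasure P]
    (X : Ω → ℝ) (hX : Measurable X) (hX_nonneg : ∀ ω, 0 ≤ X ω)
    (hX_int : Integrable X P) (hX_pos : 0 < ∫ ω, X ω ∂P) :
    ∀ l : ℝ, 0 ≤ l →
      ∫ ω, (1 - Real.exp (-l * X ω)) ∂(P[|{ω | 0 < X ω}]) =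
        (∫ ω, X ω ∂(P[|{ω | 0 < X ω}])) *
          ∫ s in (0:ℝ)..l,
            ∫ x, Real.exp (-s * x) ∂(sizeBiasedLaw (P.map X) (∫ ω, X ω ∂P)) := by
  intro l hl
  have hvanish : ∀ ω ∉ {ω | 0 < X ω}, X ω = 0 := fun ω hω =>
    le_antisymm (not_lt.1 hω) (hX_nonneg ω)
  have hP : (P {ω | 0 < X ω}).toReal ≠ 0 := ENNReal.toReal_ne_zero.2
    ⟨measure_setOf_pos_ne_zero_of_integral_pos hX_nonneg hX_int hX_pos, by finiteness⟩
  rw [integral_cond_of_forall_compl_eq_zero fun ω hω => by simp [hvanish ω hω],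
    integral_cond_of_forall_compl_eq_zero hvanish,
    intervalIntegral.integral_congr fun s _ =>
      integral_sizeBiasedLaw_map hX hX_nonneg hX_pos.le
        (by fun_prop : Measurable fun x => exp (-s * x)),
    intervalIntegral.integral_const_mul,
    intervalIntegral_integral_mul_exp_neg_mul hX hX_nonneg hX_int hl]
  field_simp
end

section
/- Let (Z_n) be a critical Galton-Watson process with Z₀ = 1, offspring mean 1, and offspring variance σ² ∈ (0,∞). Then n·P(Z_n > 0) → 2/σ² as n → ∞. -/
/-!
Let `F` be the generating function of `μ` and `q n = F^[n] 0`, so that `P(Z_n > 0) = 1 - q n`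
because `E[s ^ Z_n] = F^[n] s`; the latter holds since `Z_n` is independent of the offspring
numbers of generation `n`. Criticality gives `F s - s = (1 - s)² R s`, where
`R s = ∑ μ k Q_k(s)` and `Q_k` is the polynomial `(s ^ k - 1 - k (s - 1)) / (s - 1)²`.
Thus `a n = 1 - q n` satisfies `a n - a (n + 1) = a n ² R (q n)`; `R` is bounded below by a
positive constant, so `a n → 0`, and `R` is continuous on `[0, 1]` with `R 1 = σ² / 2`.
Hence `1 / a (n + 1) - 1 / a n → σ² / 2`, and Cesàro averaging gives `n a n → 2 / σ²`.
-/

open MeasureTheory ProbabilityTheory Filter Topology Finset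

namespace GaltonWatson

/-- `(s ^ k - 1 - k (s - 1)) / (s - 1) ^ 2`, written as a polynomial in `s`. -/
def powRemainder (k : ℕ) (s : ℝ) : ℝ := ∑ i ∈ range k, ∑ j ∈ range i, s ^ j

lemma pow_sub_one_add_mul_eq (k : ℕ) (s : ℝ) :
    s ^ k - 1 + k * (1 - s) = (1 - s) ^ 2 * powRemainder k s := by
  induction k with
  | zero => simp [powRemainder]
  | succ k ih =>
    have hgeom := geom_sum_mul s k
    simp only [powRemainder, sum_range_succ] at ih ⊢
    push_cast
    linear_combination ih + (1 - s) * hgeom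

lemma powRemainder_nonneg (k : ℕ) {s : ℝ} (hs : 0 ≤ s) : 0 ≤ powRemainder k s := by
  unfold powRemainder; positivity

lemma powRemainder_one (k : ℕ) : powRemainder k 1 = k * (k - 1) / 2 := by
  induction k with
  | zero => simp [powRemainder]
  | succ k ih =>
    simp only [powRemainder, sum_range_succ, one_pow, sum_const, card_range, nsmul_eq_mul,
      mul_one] at ih ⊢
    push_cast
    linear_combination ih

lemma powRemainder_le (k : ℕ) {s : ℝ} (hs : s ∈ Set.Icc (0 : ℝ) 1) :
    powRemainder k s ≤ k * (k - 1) / 2 := by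
  rw [← powRemainder_one]
  unfold powRemainder
  gcongr
  exacts [hs.1, hs.2]

lemma one_le_powRemainder {k : ℕ} (hk : 2 ≤ k) {s : ℝ} (hs : 0 ≤ s) :
    1 ≤ powRemainder k s :=
  calc (1 : ℝ) = powRemainder 2 s := by simp [powRemainder, sum_range_succ]
    _ ≤ powRemainder k s :=
      sum_le_sum_of_subset_of_nonneg (range_subset_range.2 hk)
        fun i _ _ => sum_nonneg fun j _ => pow_nonneg hs j

lemma continuous_powRemainder (k : ℕ) : Continuous (powRemainder k) := by
  unfold powRemainder; fun_prop

noncomputable def pgf (μ : ℕ → ℝ) (s : ℝ) : ℝ := ∑' k, μ k * s ^ k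

noncomputable def pgfRemainder (μ : ℕ → ℝ) (s : ℝ) : ℝ := ∑' k, μ k * powRemainder k s

section Pgf

variable {μ : ℕ → ℝ} {s : ℝ}

lemma summable_of_tsum_eq_one {f : ℕ → ℝ} (h : ∑' k, f k = 1) : Summable f := by
  by_contra hf
  simp [tsum_eq_zero_of_not_summable hf] at h

lemma exists_two_le_pos_of_tsum_pos (hμ : ∀ k, 0 ≤ μ k)
    (hvar : 0 < ∑' k : ℕ, (k : ℝ) * ((k : ℝ) - 1) * μ k) :
    ∃ k, 2 ≤ k ∧ 0 < μ k := by
  by_contra! hsmall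
  have hzero (k : ℕ) : (k : ℝ) * ((k : ℝ) - 1) * μ k = 0 := by
    match k with
    | 0 | 1 => simp
    | k + 2 => rw [le_antisymm (hsmall (k + 2) (by omega)) (hμ (k + 2)), mul_zero]
  simp [hzero] at hvar

lemma summable_mul_pow (hμ : ∀ k, 0 ≤ μ k) (hsum : Summable μ)
    (hs : s ∈ Set.Icc (0 : ℝ) 1) :
    Summable fun k => μ k * s ^ k :=
  hsum.of_nonneg_of_le (fun k => mul_nonneg (hμ k) (pow_nonneg hs.1 k))
    fun k => mul_le_of_le_one_right (hμ k) (pow_le_one₀ hs.1 hs.2)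

lemma pgf_nonneg (hμ : ∀ k, 0 ≤ μ k) (hs : 0 ≤ s) : 0 ≤ pgf μ s :=
  tsum_nonneg fun k => mul_nonneg (hμ k) (pow_nonneg hs k)

lemma pgf_le_one (hμ : ∀ k, 0 ≤ μ k) (h1 : ∑' k, μ k = 1)
    (hs : s ∈ Set.Icc (0 : ℝ) 1) : pgf μ s ≤ 1 := by
  have hsum := summable_of_tsum_eq_one h1
  rw [← h1]
  exact (summable_mul_pow hμ hsum hs).tsum_le_tsum
    (fun k => mul_le_of_le_one_right (hμ k) (pow_le_one₀ hs.1 hs.2)) hsum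

lemma pgf_mem_Icc (hμ : ∀ k, 0 ≤ μ k) (h1 : ∑' k, μ k = 1)
    (hs : s ∈ Set.Icc (0 : ℝ) 1) : pgf μ s ∈ Set.Icc (0 : ℝ) 1 :=
  ⟨pgf_nonneg hμ hs.1, pgf_le_one hμ h1 hs⟩

lemma pgf_lt_one (hμ : ∀ k, 0 ≤ μ k) (h1 : ∑' k, μ k = 1) {k₀ : ℕ} (hk₀ : k₀ ≠ 0)
    (hμk₀ : 0 < μ k₀) (hs : s ∈ Set.Ico (0 : ℝ) 1) : pgf μ s < 1 := by
  have hsum := summable_of_tsum_eq_one h1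
  rw [← h1]
  exact (summable_mul_pow hμ hsum (Set.Ico_subset_Icc_self hs)).tsum_lt_tsum
    (fun k => mul_le_of_le_one_right (hμ k) (pow_le_one₀ hs.1 hs.2.le))
    (mul_lt_of_lt_one_right hμk₀ (pow_lt_one₀ hs.1 hs.2 hk₀)) hsum

lemma pgf_sub_self (hμ : ∀ k, 0 ≤ μ k) (h1 : ∑' k, μ k = 1)
    (hmean : ∑' k : ℕ, (k : ℝ) * μ k = 1) (hs : s ∈ Set.Icc (0 : ℝ) 1) :
    pgf μ s - s = (1 - s) ^ 2 * pgfRemainder μ s := by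
  have hsum := summable_of_tsum_eq_one h1
  have hterm (k : ℕ) : (1 - s) ^ 2 * (μ k * powRemainder k s)
      = μ k * s ^ k - μ k + (1 - s) * ((k : ℝ) * μ k) := by
    linear_combination (-μ k) * pow_sub_one_add_mul_eq k s
  rw [pgfRemainder, ← tsum_mul_left, tsum_congr hterm,
    ((summable_mul_pow hμ hsum hs).sub hsum).tsum_add
      ((summable_of_tsum_eq_one hmean).mul_left _),
    (summable_mul_pow hμ hsum hs).tsum_sub hsum, tsum_mul_left, h1, hmean, pgf]
  ring

lemma mul_powRemainder_le (hμ : ∀ k, 0 ≤ μ k) (k : ℕ) (hs : s ∈ Set.Icc (0 : ℝ) 1) :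
    μ k * powRemainder k s ≤ (k : ℝ) * ((k : ℝ) - 1) * μ k / 2 := by
  have := mul_le_mul_of_nonneg_left (powRemainder_le k hs) (hμ k)
  linarith

lemma summable_mul_powRemainder (hμ : ∀ k, 0 ≤ μ k)
    (hvar : Summable fun k : ℕ => (k : ℝ) * ((k : ℝ) - 1) * μ k)
    (hs : s ∈ Set.Icc (0 : ℝ) 1) :
    Summable fun k => μ k * powRemainder k s :=
  (hvar.div_const 2).of_nonneg_of_le (fun k => mul_nonneg (hμ k) (powRemainder_nonneg k hs.1))
    fun k => mul_powRemainder_le hμ k hs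

lemma continuousOn_pgfRemainder (hμ : ∀ k, 0 ≤ μ k)
    (hvar : Summable fun k : ℕ => (k : ℝ) * ((k : ℝ) - 1) * μ k) :
    ContinuousOn (pgfRemainder μ) (Set.Icc 0 1) :=
  continuousOn_tsum (fun k => ((continuous_powRemainder k).const_mul _).continuousOn)
    (hvar.div_const 2) fun k s hs => by
      rw [Real.norm_of_nonneg (mul_nonneg (hμ k) (powRemainder_nonneg k hs.1))]
      exact mul_powRemainder_le hμ k hs

lemma pgfRemainder_one :
    pgfRemainder μ 1 = (∑' k : ℕ, (k : ℝ) * ((k : ℝ) - 1) * μ k) / 2 := by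
  rw [pgfRemainder, ← tsum_div_const]
  exact tsum_congr fun k => by rw [powRemainder_one]; ring

lemma le_pgfRemainder (hμ : ∀ k, 0 ≤ μ k)
    (hvar : Summable fun k : ℕ => (k : ℝ) * ((k : ℝ) - 1) * μ k) {k₀ : ℕ}
    (hk₀ : 2 ≤ k₀) (hs : s ∈ Set.Icc (0 : ℝ) 1) : μ k₀ ≤ pgfRemainder μ s :=
  calc μ k₀ ≤ μ k₀ * powRemainder k₀ s :=
        le_mul_of_one_le_right (hμ k₀) (one_le_powRemainder hk₀ hs.1)
    _ ≤ pgfRemainder μ s := (summable_mul_powRemainder hμ hvar hs).le_tsum k₀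
        fun k _ => mul_nonneg (hμ k) (powRemainder_nonneg k hs.1)

end Pgf

lemma tendsto_zero_of_sq_le_sub_succ {a : ℕ → ℝ} {c : ℝ} (hc : 0 < c)
    (ha : ∀ n, 0 ≤ a n) (hstep : ∀ n, c * a n ^ 2 ≤ a n - a (n + 1)) :
    Tendsto a atTop (𝓝 0) := by
  have hanti : Antitone a :=
    antitone_nat_of_succ_le fun n => by nlinarith [hstep n, sq_nonneg (a n)]
  have hlim := tendsto_atTop_ciInf hanti ⟨0, Set.forall_mem_range.2 ha⟩
  set l := ⨅ n, a n
  have hl : 0 ≤ l := le_ciInf ha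
  have hdiff : Tendsto (fun n => a n - a (n + 1)) atTop (𝓝 (l - l)) :=
    hlim.sub (hlim.comp (tendsto_add_atTop_nat 1))
  have hsq : c * l ^ 2 ≤ l - l :=
    le_of_tendsto_of_tendsto' ((hlim.pow 2).const_mul c) hdiff hstep
  have hl0 : l = 0 := by
    by_contra hl0
    linarith [mul_pos hc (pow_pos (hl.lt_of_ne' hl0) 2)]
  rwa [hl0] at hlim

lemma tendsto_div_nat_of_tendsto_sub {b : ℕ → ℝ} {c : ℝ}
    (hb : Tendsto (fun n => b (n + 1) - b n) atTop (𝓝 c)) :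
    Tendsto (fun n => b n / n) atTop (𝓝 c) := by
  have hsum := hb.cesaro.add (tendsto_const_div_atTop_nhds_zero_nat (b 0))
  rw [add_zero] at hsum
  refine hsum.congr fun n => ?_
  rw [sum_range_sub, inv_mul_eq_div, ← add_div, sub_add_cancel]

lemma tendsto_nat_mul_of_sub_succ_eq {a r : ℕ → ℝ} {c : ℝ} (hc : 0 < c)
    (ha : ∀ n, 0 < a n) (ha0 : Tendsto a atTop (𝓝 0))
    (hstep : ∀ n, a n - a (n + 1) = a n ^ 2 * r n) (hr : Tendsto r atTop (𝓝 c)) :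
    Tendsto (fun n : ℕ => n * a n) atTop (𝓝 c⁻¹) := by
  have hinv (n : ℕ) : (a (n + 1))⁻¹ - (a n)⁻¹ = r n / (1 - a n * r n) := by
    have hsucc : a (n + 1) = a n * (1 - a n * r n) := by linear_combination -hstep n
    have hfactor : 1 - a n * r n ≠ 0 := right_ne_zero_of_mul (hsucc ▸ (ha (n + 1)).ne')
    have := (ha n).ne'
    rw [hsucc]
    field_simp
    ring
  have hlim : Tendsto (fun n => r n / (1 - a n * r n)) atTop (𝓝 (c / (1 - 0 * c))) :=
    hr.div (tendsto_const_nhds.sub (ha0.mul hr)) (by simp)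
  rw [zero_mul, sub_zero, div_one] at hlim
  have := (tendsto_div_nat_of_tendsto_sub (b := fun n => (a n)⁻¹)
    (hlim.congr fun n => (hinv n).symm)).inv₀ hc.ne'
  refine this.congr fun n => ?_
  rw [inv_div, div_inv_eq_mul]

lemma pgf_iterate_zero_mem_Ico {μ : ℕ → ℝ} (hμ : ∀ k, 0 ≤ μ k) (h1 : ∑' k, μ k = 1)
    {k₀ : ℕ} (hk₀ : k₀ ≠ 0) (hμk₀ : 0 < μ k₀) (n : ℕ) :
    (pgf μ)^[n] 0 ∈ Set.Ico (0 : ℝ) 1 := by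
  induction n with
  | zero => exact ⟨le_rfl, zero_lt_one⟩
  | succ n ih =>
    rw [Function.iterate_succ_apply']
    exact ⟨pgf_nonneg hμ ih.1, pgf_lt_one hμ h1 hk₀ hμk₀ ih⟩

lemma tendsto_nat_mul_one_sub_pgf_iterate {μ : ℕ → ℝ} (hμ : ∀ k, 0 ≤ μ k)
    (h1 : ∑' k, μ k = 1) (hmean : ∑' k : ℕ, (k : ℝ) * μ k = 1)
    (hvar : Summable fun k : ℕ => (k : ℝ) * ((k : ℝ) - 1) * μ k) {σ2 : ℝ}
    (hσ2 : σ2 = ∑' k : ℕ, (k : ℝ) * ((k : ℝ) - 1) * μ k) (hσ2_pos : 0 < σ2) :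
    Tendsto (fun n : ℕ => (n : ℝ) * (1 - (pgf μ)^[n] 0)) atTop (𝓝 (2 / σ2)) := by
  obtain ⟨k₀, hk₀, hμk₀⟩ := exists_two_le_pos_of_tsum_pos hμ (hσ2 ▸ hσ2_pos)
  set q : ℕ → ℝ := fun n => (pgf μ)^[n] 0
  have hq (n : ℕ) : q n ∈ Set.Ico (0 : ℝ) 1 :=
    pgf_iterate_zero_mem_Ico hμ h1 (by omega) hμk₀ n
  have hstep (n : ℕ) : (1 - q n) - (1 - q (n + 1)) = (1 - q n) ^ 2 * pgfRemainder μ (q n) := by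
    simp only [q, Function.iterate_succ_apply']
    linear_combination pgf_sub_self hμ h1 hmean (Set.Ico_subset_Icc_self (hq n))
  have hextinct : Tendsto (fun n => 1 - q n) atTop (𝓝 0) :=
    tendsto_zero_of_sq_le_sub_succ hμk₀ (fun n => sub_nonneg.2 (hq n).2.le) fun n => by
      rw [hstep, mul_comm (μ k₀)]
      exact mul_le_mul_of_nonneg_left
        (le_pgfRemainder hμ hvar hk₀ (Set.Ico_subset_Icc_self (hq n))) (sq_nonneg _)
  have hq1 : Tendsto q atTop (𝓝[Set.Icc 0 1] 1) := by
    refine tendsto_nhdsWithin_iff.2 ⟨?_, .of_forall fun n => Set.Ico_subset_Icc_self (hq n)⟩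
    simpa using (tendsto_const_nhds (x := (1 : ℝ))).sub hextinct
  have hR : Tendsto (fun n => pgfRemainder μ (q n)) atTop (𝓝 (σ2 / 2)) := by
    rw [hσ2, ← pgfRemainder_one]
    exact ((continuousOn_pgfRemainder hμ hvar) 1 ⟨zero_le_one, le_rfl⟩).tendsto.comp hq1
  simpa only [inv_div] using tendsto_nat_mul_of_sub_succ_eq (half_pos hσ2_pos)
    (fun n => sub_pos.2 (hq n).2) hextinct hstep hR

section Offspring

variable {Ω : Type*} {L : ℕ → ℕ → Ω → ℕ} {Z : ℕ → Ω → ℕ}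

abbrev offspringSigma (L : ℕ → ℕ → Ω → ℕ) (n : ℕ) : MeasurableSpace Ω :=
  ⨆ p ∈ {q : ℕ × ℕ | q.1 < n}, MeasurableSpace.comap (L p.1 p.2) inferInstance

lemma measurable_sum_range_apply :
    Measurable fun p : ℕ × (ℕ → ℕ) => ∑ i ∈ range p.1, p.2 i :=
  measurable_from_prod_countable_right fun j =>
    show Measurable fun x : ℕ → ℕ => ∑ i ∈ range j, x i from
      Finset.measurable_sum _ fun i _ => measurable_pi_apply i

lemma measurable_offspring_row {S : Set (ℕ × ℕ)} {n : ℕ} (hS : ∀ i, (n, i) ∈ S) :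
    Measurable[⨆ p ∈ S, MeasurableSpace.comap (L p.1 p.2) inferInstance]
      fun ω i => L n i ω :=
  @measurable_pi_lambda _ _ _ (⨆ p ∈ S, MeasurableSpace.comap (L p.1 p.2) inferInstance) _ _
    fun i => Measurable.of_comap_le <|
      le_biSup (fun p : ℕ × ℕ => MeasurableSpace.comap (L p.1 p.2) inferInstance) (hS i)

lemma measurable_generation (hZ0 : ∀ ω, Z 0 ω = 1)
    (hZ : ∀ n ω, Z (n + 1) ω = ∑ i ∈ range (Z n ω), L n i ω) (n : ℕ) :
    Measurable[offspringSigma L n] (Z n) := by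
  induction n with
  | zero => simp only [funext hZ0]; exact measurable_const
  | succ n ih =>
    have hpast : Measurable[offspringSigma L (n + 1)] (Z n) :=
      ih.mono (biSup_mono fun p (hp : p.1 < n) => hp.trans n.lt_succ_self) le_rfl
    rw [funext (hZ n)]
    exact measurable_sum_range_apply.comp
      (hpast.prodMk (measurable_offspring_row fun _ => n.lt_succ_self))

end Offspring

section Probability

variable {Ω : Type*} [MeasurableSpace Ω] {P : Measure Ω} {μ : ℕ → ℝ} {s : ℝ}

lemma integral_comp_prodMk_of_indepFun [IsFiniteMeasure P] {β γ : Type*}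
    [MeasurableSpace β] [MeasurableSpace γ] {X : Ω → β} {Y : Ω → γ} (hX : Measurable X)
    (hY : Measurable Y) (hXY : IndepFun X Y P)
    {f : β × γ → ℝ} (hf : Measurable f) {C : ℝ} (hC : ∀ z, ‖f z‖ ≤ C) :
    ∫ ω, f (X ω, Y ω) ∂P = ∫ ω, ∫ ω', f (X ω, Y ω') ∂P ∂P := by
  have hinner : StronglyMeasurable fun x => ∫ y, f (x, y) ∂(P.map Y) :=
    hf.stronglyMeasurable.integral_prod_right'
  calc ∫ ω, f (X ω, Y ω) ∂P = ∫ z, f z ∂(P.map fun ω => (X ω, Y ω)) :=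
        (integral_map (hX.prodMk hY).aemeasurable hf.aestronglyMeasurable).symm
    _ = ∫ z, f z ∂((P.map X).prod (P.map Y)) := by
        rw [(indepFun_iff_map_prod_eq_prod_map_map hX.aemeasurable hY.aemeasurable).1 hXY]
    _ = ∫ x, ∫ y, f (x, y) ∂(P.map Y) ∂(P.map X) :=
        integral_prod _ (.of_bound hf.aestronglyMeasurable C (ae_of_all _ hC))
    _ = ∫ ω, ∫ ω', f (X ω, Y ω') ∂P ∂P := by
        rw [integral_map hX.aemeasurable hinner.aestronglyMeasurable]
        refine integral_congr_ae (ae_of_all _ fun ω => ?_)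
        exact integral_map hY.aemeasurable (hf.comp measurable_prodMk_left).aestronglyMeasurable

lemma integral_pow_eq_pgf [IsProbabilityMeasure P] {X : Ω → ℕ} (hX : Measurable X)
    (hlaw : ∀ k, (P.map X {k}).toReal = μ k) (hs : s ∈ Set.Icc (0 : ℝ) 1) :
    ∫ ω, s ^ X ω ∂P = pgf μ s := by
  have : IsProbabilityMeasure (P.map X) := Measure.isProbabilityMeasure_map hX.aemeasurable
  have hbound (k : ℕ) : ‖s ^ k‖ ≤ 1 := by
    rw [Real.norm_of_nonneg (pow_nonneg hs.1 k)]; exact pow_le_one₀ hs.1 hs.2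
  rw [← integral_map hX.aemeasurable Measurable.of_discrete.aestronglyMeasurable,
    integral_countable (.of_bound Measurable.of_discrete.aestronglyMeasurable 1
      (ae_of_all _ hbound))]
  exact tsum_congr fun k => by rw [measureReal_def, hlaw, smul_eq_mul]

lemma integral_prod_pow_eq_pgf_pow [IsProbabilityMeasure P] {X : ℕ → Ω → ℕ}
    (hX : ∀ i, Measurable (X i)) (hlaw : ∀ i k, (P.map (X i) {k}).toReal = μ k)
    (hindep : iIndepFun X P) (hs : s ∈ Set.Icc (0 : ℝ) 1) (j : ℕ) :
    ∫ ω, ∏ i ∈ range j, s ^ X i ω ∂P = pgf μ s ^ j := by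
  simp only [prod_range]
  rw [(hindep.precomp Fin.val_injective).integral_fun_prod_comp (f := fun _ k => s ^ k)
    (fun i => (hX i).aemeasurable) fun _ => Measurable.of_discrete.aestronglyMeasurable]
  simp [integral_pow_eq_pgf (hX _) (hlaw _) hs]

variable {L : ℕ → ℕ → Ω → ℕ} {Z : ℕ → Ω → ℕ}

lemma offspringSigma_le (hL : ∀ n i, Measurable (L n i)) (n : ℕ) :
    offspringSigma L n ≤ ‹MeasurableSpace Ω› :=
  iSup₂_le fun p _ => (hL p.1 p.2).comap_le

lemma indepFun_generation_offspring_row (hL : ∀ n i, Measurable (L n i))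
    (hindep : iIndepFun (fun p : ℕ × ℕ => L p.1 p.2) P) (hZ0 : ∀ ω, Z 0 ω = 1)
    (hZ : ∀ n ω, Z (n + 1) ω = ∑ i ∈ range (Z n ω), L n i ω) (n : ℕ) :
    IndepFun (Z n) (fun ω i => L n i ω) P := by
  have hdisj : Disjoint {q : ℕ × ℕ | q.1 < n} {q | q.1 = n} :=
    Set.disjoint_left.2 fun q (hlt : q.1 < n) (heq : q.1 = n) => hlt.ne heq
  have hsplit := indep_iSup_of_disjoint (fun p => (hL p.1 p.2).comap_le)
    ((iIndepFun_iff_iIndep _ _ _).1 hindep) hdisj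
  have hpast : MeasurableSpace.comap (Z n) inferInstance ≤ offspringSigma L n :=
    (measurable_generation hZ0 hZ n).comap_le
  rw [IndepFun_iff_Indep]
  exact indep_of_indep_of_le hsplit hpast
    (measurable_offspring_row (S := {q | q.1 = n}) fun _ => rfl).comap_le

lemma integral_pow_generation_succ [IsProbabilityMeasure P] (hL : ∀ n i, Measurable (L n i))
    (hlaw : ∀ n i k, (P.map (L n i) {k}).toReal = μ k)
    (hindep : iIndepFun (fun p : ℕ × ℕ => L p.1 p.2) P) (hZ0 : ∀ ω, Z 0 ω = 1)
    (hZ : ∀ n ω, Z (n + 1) ω = ∑ i ∈ range (Z n ω), L n i ω)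
    (hs : s ∈ Set.Icc (0 : ℝ) 1) (n : ℕ) :
    ∫ ω, s ^ Z (n + 1) ω ∂P = ∫ ω, pgf μ s ^ Z n ω ∂P := by
  have hf : Measurable fun p : ℕ × (ℕ → ℕ) => ∏ i ∈ range p.1, s ^ p.2 i :=
    measurable_from_prod_countable_right fun j =>
      show Measurable fun x : ℕ → ℕ => ∏ i ∈ range j, s ^ x i from
        Finset.measurable_prod _ fun i _ => Measurable.of_discrete.comp (measurable_pi_apply i)
  have hbound (p : ℕ × (ℕ → ℕ)) : ‖∏ i ∈ range p.1, s ^ p.2 i‖ ≤ 1 := by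
    rw [norm_prod]
    exact prod_le_one (fun _ _ => norm_nonneg _) fun i _ => by
      rw [norm_pow, Real.norm_of_nonneg hs.1]; exact pow_le_one₀ hs.1 hs.2
  have hrow_indep (n : ℕ) : iIndepFun (L n) P :=
    hindep.precomp (g := fun i => (n, i)) fun _ _ h => (Prod.mk.inj h).2
  simp_rw [hZ n, ← prod_pow_eq_pow_sum]
  rw [integral_comp_prodMk_of_indepFun
    ((measurable_generation hZ0 hZ n).mono (offspringSigma_le hL n) le_rfl)
    (measurable_pi_lambda _ fun i => hL n i)
    (indepFun_generation_offspring_row hL hindep hZ0 hZ n) hf hbound]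
  exact integral_congr_ae (ae_of_all _ fun ω =>
    integral_prod_pow_eq_pgf_pow (hL n) (hlaw n) (hrow_indep n) hs _)

lemma integral_pow_generation [IsProbabilityMeasure P] (hμ : ∀ k, 0 ≤ μ k)
    (h1 : ∑' k, μ k = 1) (hL : ∀ n i, Measurable (L n i))
    (hlaw : ∀ n i k, (P.map (L n i) {k}).toReal = μ k)
    (hindep : iIndepFun (fun p : ℕ × ℕ => L p.1 p.2) P) (hZ0 : ∀ ω, Z 0 ω = 1)
    (hZ : ∀ n ω, Z (n + 1) ω = ∑ i ∈ range (Z n ω), L n i ω) (n : ℕ) :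
    ∀ s ∈ Set.Icc (0 : ℝ) 1, ∫ ω, s ^ Z n ω ∂P = (pgf μ)^[n] s := by
  induction n with
  | zero => simp [hZ0]
  | succ n ih =>
    intro s hs
    rw [integral_pow_generation_succ hL hlaw hindep hZ0 hZ hs, ih _ (pgf_mem_Icc hμ h1 hs),
      ← Function.iterate_succ_apply]

lemma survival_probability [IsProbabilityMeasure P] (hμ : ∀ k, 0 ≤ μ k)
    (h1 : ∑' k, μ k = 1) (hL : ∀ n i, Measurable (L n i))
    (hlaw : ∀ n i k, (P.map (L n i) {k}).toReal = μ k)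
    (hindep : iIndepFun (fun p : ℕ × ℕ => L p.1 p.2) P) (hZ0 : ∀ ω, Z 0 ω = 1)
    (hZ : ∀ n ω, Z (n + 1) ω = ∑ i ∈ range (Z n ω), L n i ω) (n : ℕ) :
    (P {ω | 0 < Z n ω}).toReal = 1 - (pgf μ)^[n] 0 := by
  have hext : MeasurableSet {ω | Z n ω = 0} :=
    (measurable_generation hZ0 hZ n).mono (offspringSigma_le hL n) le_rfl
      (measurableSet_singleton 0)
  have hzero : (fun ω => (0 : ℝ) ^ Z n ω) = {ω | Z n ω = 0}.indicator 1 := by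
    ext ω
    by_cases h : Z n ω = 0 <;> simp [h]
  have hpos : {ω | 0 < Z n ω} = {ω | Z n ω = 0}ᶜ := by
    ext ω
    simp [Nat.pos_iff_ne_zero]
  rw [← integral_pow_generation hμ h1 hL hlaw hindep hZ0 hZ n 0 ⟨le_rfl, zero_le_one⟩, hzero,
    integral_indicator_one hext, hpos, ← measureReal_def, measureReal_compl hext, probReal_univ]

end Probability

end GaltonWatson

open GaltonWatson

theorem stmt_12 {Ω : Type*} [MeasureSpace Ω] (P : Measure Ω) [IsProbabilityMeasure P]
    (μ : ℕ → ℝ) (hμ_nonneg : ∀ k, 0 ≤ μ k) (hμ_sum : ∑' k : ℕ, μ k = 1)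
    (hμ_mean : ∑' k : ℕ, (k : ℝ) * μ k = 1)
    (σ2 : ℝ) (hσ2_pos : 0 < σ2)
    (hσ2_summable : Summable (fun k : ℕ => (k : ℝ) * ((k : ℝ) - 1) * μ k))
    (hσ2 : σ2 = ∑' k : ℕ, (k : ℝ) * ((k : ℝ) - 1) * μ k)
    (L : ℕ → ℕ → Ω → ℕ) (hL_meas : ∀ n i, Measurable (L n i))
    (hL_law : ∀ n i k, (P.map (L n i) {k}).toReal = μ k)
    (hL_indep : iIndepFun (fun p : ℕ × ℕ => L p.1 p.2) P)
    (Z : ℕ → Ω → ℕ) (hZ0 : ∀ ω, Z 0 ω = 1)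
    (hZrec : ∀ n ω, Z (n + 1) ω = ∑ i ∈ Finset.range (Z n ω), L n i ω) :
    Tendsto (fun n : ℕ => (n : ℝ) * (P {ω | 0 < Z n ω}).toReal) atTop (nhds (2 / σ2)) := by
  refine (tendsto_nat_mul_one_sub_pgf_iterate hμ_nonneg hμ_sum hμ_mean hσ2_summable hσ2
    hσ2_pos).congr fun n => ?_
  rw [survival_probability hμ_nonneg hμ_sum hL_meas hL_law hL_indep hZ0 hZrec]
end

section
/- Let X_n, X be nonnegative random variables with E[X_n] = E[X] = a ∈ (0,∞) for all n, and suppose the Laplace transforms of the size-biased transforms converge pointwise: E[X_n e^{-λX_n}]/a → E[X e^{-λX}]/a for every λ ≥ 0. Then E[e^{-λX_n}] → E[e^{-λX}] for every λ ≥ 0, i.e., X_n converges to X in distribution. -/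
/-!
Write `φ(s) = E[e^{-sY}]` and `ψ(s) = E[Y e^{-sY}]`, so that `ψ / a` is the Laplace transform of
the size-biased transform of `Y`. Differentiating under the integral gives `φ' = -ψ`, hence
`φ(l) = 1 - ∫₀ˡ ψ(s) ds`. Since `0 ≤ ψₙ ≤ E[Xₙ] = a`, pointwise convergence of the `ψₙ` passes
to their integrals over `[0, l]` by dominated convergence, and therefore to the `φₙ(l)`.
-/

open MeasureTheory Filter Set Topology Real

lemma norm_exp_neg_mul_le_one {s y : ℝ} (hs : 0 ≤ s) (hy : 0 ≤ y) : ‖rexp (-s * y)‖ ≤ 1 := by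
  rw [norm_of_nonneg (exp_pos _).le, exp_le_one_iff]
  nlinarith

lemma norm_mul_exp_neg_mul_le {s y : ℝ} (hs : 0 ≤ s) (hy : 0 ≤ y) : ‖y * rexp (-s * y)‖ ≤ y := by
  rw [norm_mul, norm_of_nonneg hy]
  exact mul_le_of_le_one_right hy (norm_exp_neg_mul_le_one hs hy)

section LaplaceTransform

variable {Ω : Type*} [MeasurableSpace Ω] {μ : Measure Ω} {Y : Ω → ℝ}

lemma norm_integral_mul_exp_neg_mul_le (hY : Integrable Y μ) (hY0 : 0 ≤ᵐ[μ] Y) {s : ℝ}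
    (hs : 0 ≤ s) : ‖∫ ω, Y ω * rexp (-s * Y ω) ∂μ‖ ≤ ∫ ω, Y ω ∂μ :=
  norm_integral_le_of_norm_le hY <| by
    filter_upwards [hY0] with ω hω using norm_mul_exp_neg_mul_le hs hω

lemma continuousOn_integral_mul_exp_neg_mul (hY : Integrable Y μ) (hY0 : 0 ≤ᵐ[μ] Y) :
    ContinuousOn (fun s => ∫ ω, Y ω * rexp (-s * Y ω) ∂μ) (Ici 0) := fun s _ =>
  continuousWithinAt_of_dominated (bound := Y)
    (Eventually.of_forall fun t => (hY.aemeasurable.mul (by fun_prop)).aestronglyMeasurable)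
    (eventually_nhdsWithin_of_forall fun t (ht : 0 ≤ t) => by
      filter_upwards [hY0] with ω hω using norm_mul_exp_neg_mul_le ht hω)
    hY (ae_of_all _ fun ω => by fun_prop)

variable [IsFiniteMeasure μ]

lemma integrable_exp_neg_mul (hY : AEMeasurable Y μ) (hY0 : 0 ≤ᵐ[μ] Y) {s : ℝ} (hs : 0 ≤ s) :
    Integrable (fun ω => rexp (-s * Y ω)) μ :=
  (integrable_const 1).mono' (by fun_prop) <| by
    filter_upwards [hY0] with ω hω using norm_exp_neg_mul_le_one hs hω

lemma continuousOn_integral_exp_neg_mul (hY : AEMeasurable Y μ) (hY0 : 0 ≤ᵐ[μ] Y) :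
    ContinuousOn (fun s => ∫ ω, rexp (-s * Y ω) ∂μ) (Ici 0) := fun s _ =>
  continuousWithinAt_of_dominated (bound := fun _ => 1)
    (Eventually.of_forall fun t => by fun_prop)
    (eventually_nhdsWithin_of_forall fun t (ht : 0 ≤ t) => by
      filter_upwards [hY0] with ω hω using norm_exp_neg_mul_le_one ht hω)
    (integrable_const 1) (ae_of_all _ fun ω => by fun_prop)

lemma hasDerivAt_integral_exp_neg_mul (hY : Integrable Y μ) (hY0 : 0 ≤ᵐ[μ] Y) {s : ℝ}
    (hs : 0 < s) :
    HasDerivAt (fun t => ∫ ω, rexp (-t * Y ω) ∂μ) (-∫ ω, Y ω * rexp (-s * Y ω) ∂μ) s := by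
  rw [← integral_neg]
  refine (hasDerivAt_integral_of_dominated_loc_of_deriv_le (bound := Y)
    (F' := fun t ω => -(Y ω * rexp (-t * Y ω))) (Ioi_mem_nhds hs)
    (Eventually.of_forall fun t => by fun_prop)
    (integrable_exp_neg_mul hY.aemeasurable hY0 hs.le)
    (hY.aemeasurable.mul (by fun_prop)).neg.aestronglyMeasurable ?_ hY ?_).2
  · filter_upwards [hY0] with ω hω t (ht : 0 < t)
    rw [norm_neg]
    exact norm_mul_exp_neg_mul_le ht.le hω
  · exact ae_of_all _ fun ω t _ =>
      ((hasDerivAt_neg t).mul_const (Y ω)).exp.congr_deriv (by ring)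

lemma integral_exp_neg_mul_eq_sub_intervalIntegral (hY : Integrable Y μ) (hY0 : 0 ≤ᵐ[μ] Y)
    {l : ℝ} (hl : 0 ≤ l) :
    ∫ ω, rexp (-l * Y ω) ∂μ = μ.real univ - ∫ s in 0..l, ∫ ω, Y ω * rexp (-s * Y ω) ∂μ := by
  have hψ : ContinuousOn (fun s => ∫ ω, Y ω * rexp (-s * Y ω) ∂μ) (uIcc 0 l) :=
    (continuousOn_integral_mul_exp_neg_mul hY hY0).mono
      (by simp [uIcc_of_le hl, Icc_subset_Ici_self])
  have hFTC := intervalIntegral.integral_eq_sub_of_hasDeriv_right_of_le hl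
    ((continuousOn_integral_exp_neg_mul hY.aemeasurable hY0).mono Icc_subset_Ici_self)
    (fun s hs => (hasDerivAt_integral_exp_neg_mul hY hY0 hs.1).hasDerivWithinAt)
    hψ.neg.intervalIntegrable
  simp only [intervalIntegral.integral_neg, neg_zero, zero_mul, exp_zero, integral_const,
    smul_eq_mul, mul_one] at hFTC
  linarith

theorem tendsto_integral_exp_neg_mul_of_tendsto_integral_mul_exp_neg_mul {ι : Type*}
    {L : Filter ι} [L.IsCountablyGenerated] {X : ι → Ω → ℝ} {C : ℝ}
    (hX : ∀ i, Integrable (X i) μ) (hX0 : ∀ i, 0 ≤ᵐ[μ] X i) (hC : ∀ i, ∫ ω, X i ω ∂μ ≤ C)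
    (hY : Integrable Y μ) (hY0 : 0 ≤ᵐ[μ] Y)
    (hψ : ∀ s, 0 < s → Tendsto (fun i => ∫ ω, X i ω * rexp (-s * X i ω) ∂μ) L
      (𝓝 (∫ ω, Y ω * rexp (-s * Y ω) ∂μ)))
    {l : ℝ} (hl : 0 ≤ l) :
    Tendsto (fun i => ∫ ω, rexp (-l * X i ω) ∂μ) L (𝓝 (∫ ω, rexp (-l * Y ω) ∂μ)) := by
  simp only [integral_exp_neg_mul_eq_sub_intervalIntegral hY hY0 hl,
    fun i => integral_exp_neg_mul_eq_sub_intervalIntegral (hX i) (hX0 i) hl]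
  refine tendsto_const_nhds.sub <|
    intervalIntegral.tendsto_integral_filter_of_dominated_convergence (fun _ => C)
      (Eventually.of_forall fun i => ?_) (Eventually.of_forall fun i => ?_)
      intervalIntegrable_const (ae_of_all _ fun s hs => hψ s ?_)
  · exact ((continuousOn_integral_mul_exp_neg_mul (hX i) (hX0 i)).mono
      (by simp [uIoc_of_le hl, Ioc_subset_Icc_self.trans Icc_subset_Ici_self])).aestronglyMeasurable
      measurableSet_uIoc
  · refine ae_of_all _ fun s hs => ?_
    rw [uIoc_of_le hl] at hs
    exact (norm_integral_mul_exp_neg_mul_le (hX i) (hX0 i) hs.1.le).trans (hC i)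
  · rw [uIoc_of_le hl] at hs
    exact hs.1

end LaplaceTransform

theorem stmt_18_general {Ω : Type*} [MeasureSpace Ω] (P : Measure Ω) [IsProbabilityMeasure P]
    (X : ℕ → Ω → ℝ) (Xlim : Ω → ℝ)
    (hX_nonneg : ∀ n ω, 0 ≤ X n ω) (hXlim_nonneg : ∀ ω, 0 ≤ Xlim ω)
    (hX_int : ∀ n, Integrable (X n) P) (hXlim_int : Integrable Xlim P)
    (a : ℝ) (ha : 0 < a) (hX_mean : ∀ n, ∫ ω, X n ω ∂P = a)
    (h_conv : ∀ l : ℝ, 0 ≤ l →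
      Tendsto (fun n => (∫ ω, X n ω * Real.exp (-l * X n ω) ∂P) / a) atTop
        (nhds ((∫ ω, Xlim ω * Real.exp (-l * Xlim ω) ∂P) / a))) :
    ∀ l : ℝ, 0 ≤ l →
      Tendsto (fun n => ∫ ω, Real.exp (-l * X n ω) ∂P) atTop
        (nhds (∫ ω, Real.exp (-l * Xlim ω) ∂P)) := fun _ hl =>
  tendsto_integral_exp_neg_mul_of_tendsto_integral_mul_exp_neg_mul hX_int
    (fun n => ae_of_all _ (hX_nonneg n)) (fun n => (hX_mean n).le) hXlim_int
    (ae_of_all _ hXlim_nonneg)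
    (fun s hs => by simpa only [div_mul_cancel₀ _ ha.ne'] using (h_conv s hs.le).mul_const a) hl

theorem stmt_18 {Ω : Type*} [MeasureSpace Ω] (P : Measure Ω) [IsProbabilityMeasure P]
    (X : ℕ → Ω → ℝ) (Xlim : Ω → ℝ)
    (hX_meas : ∀ n, Measurable (X n)) (hXlim_meas : Measurable Xlim)
    (hX_nonneg : ∀ n ω, 0 ≤ X n ω) (hXlim_nonneg : ∀ ω, 0 ≤ Xlim ω)
    (hX_int : ∀ n, Integrable (X n) P) (hXlim_int : Integrable Xlim P)
    (a : ℝ) (ha : 0 < a) (hX_mean : ∀ n, ∫ ω, X n ω ∂P = a)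
    (hXlim_mean : ∫ ω, Xlim ω ∂P = a)
    (h_conv : ∀ l : ℝ, 0 ≤ l →
      Tendsto (fun n => (∫ ω, X n ω * Real.exp (-l * X n ω) ∂P) / a) atTop
        (nhds ((∫ ω, Xlim ω * Real.exp (-l * Xlim ω) ∂P) / a))) :
    ∀ l : ℝ, 0 ≤ l →
      Tendsto (fun n => ∫ ω, Real.exp (-l * X n ω) ∂P) atTop
        (nhds (∫ ω, Real.exp (-l * Xlim ω) ∂P)) :=
  stmt_18_general P X Xlim hX_nonneg hXlim_nonneg hX_int hXlim_int a ha hX_mean h_conv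
end
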